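/- arXiv:1007.1832 — 2 statements merged into one kernel-verified Lean document; each statement's English description precedes it below -/
import Mathlib

section
/- Let V be a finite-dimensional real inner product space, Cl(V) its Clifford algebra (with relation v·v = −|v|²), and S a Cl(V)-module with Clifford multiplication γ extended to exterior forms. Then for any 2-form η ∈ Λ²V one has γ(η)² = γ(η ∧ η) − |η|² · Id on S. -/
open scoped RealInnerProductSpace

/-- The quadratic form `v ↦ -|v|²` defining the Clifford algebra `Cl(V)` with relation
`v·v = -|v|²`. -/
noncomputable def negNormSqForm (V : Type*) [NormedAddCommGroup V]
    [InnerProductSpace ℝ V] : QuadraticForm ℝ V :=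
  - LinearMap.BilinMap.toQuadraticMap (innerₗ V : LinearMap.BilinForm ℝ V)

/-!
Let `γ : ΛM ≃ Cl(Q)` be the inverse of the symbol map and `B` the bilinear form associated to `Q`.
Expanding `γ (ι p * x) = ι p * γ x - (B p)⌋(γ x)` twice gives, for bivectors `α = p ∧ q` and
`β = r ∧ s`,
  `γ (α ∧ β) = γ α * γ β + ⟨α, β⟩ + γ [α, β]`,
where `⟨p ∧ q, r ∧ s⟩ = B p r * B q s - B p s * B q r` is symmetric in `(α, β)` and the bivector
`[α, β]` is antisymmetric. Summing over all pairs of terms of `η = Σ vₗ ∧ wₗ`, the brackets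
cancel and `γ η * γ η = γ (η ∧ η) - ⟨η, η⟩`. For `Q = -|·|²` one has `B = -⟪·, ·⟫`, and the two
signs in `⟨η, η⟩` cancel, leaving `|η|²`.
-/

theorem Finset.sum_sum_eq_zero_of_antisymm {ι R A : Type*} [Ring R] [Invertible (2 : R)]
    [AddCommGroup A] [Module R A] (s : Finset ι) {f : ι → ι → A}
    (hf : ∀ i j, f j i = -f i j) : ∑ i ∈ s, ∑ j ∈ s, f i j = 0 := by
  have h : ∑ i ∈ s, ∑ j ∈ s, f i j + ∑ i ∈ s, ∑ j ∈ s, f i j = 0 := by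
    conv_lhs => arg 2; rw [Finset.sum_comm]
    simp only [← Finset.sum_add_distrib]
    exact Finset.sum_eq_zero fun i _ => Finset.sum_eq_zero fun j _ => by rw [hf, neg_add_cancel]
  rw [← invOf_smul_smul (2 : R) (∑ i ∈ s, ∑ j ∈ s, f i j), two_smul, h, smul_zero]

namespace ExteriorAlgebra

variable {R M : Type*} [CommRing R] [AddCommGroup M] [Module R M]

theorem ι_mul_ι_swap (x y : M) : ι R y * ι R x = -(ι R x * ι R y) :=
  eq_neg_of_add_eq_zero_right (ι_add_mul_swap x y)

def bivectorBracket (B : LinearMap.BilinForm R M) (p q r s : M) : ExteriorAlgebra R M :=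
  B q s • (ι R p * ι R r) - B q r • (ι R p * ι R s) + B p r • (ι R q * ι R s)
    - B p s • (ι R q * ι R r)

theorem bivectorBracket_swap {B : LinearMap.BilinForm R M} (hB : LinearMap.IsSymm B)
    (p q r s : M) : bivectorBracket B r s p q = -bivectorBracket B p q r s := by
  simp only [bivectorBracket, ι_mul_ι_swap (R := R) s, ι_mul_ι_swap (R := R) r, ← hB.eq p r,
    ← hB.eq p s, ← hB.eq q r, ← hB.eq q s, RingHom.id_apply]
  module

end ExteriorAlgebra

namespace CliffordAlgebra

variable {R M : Type*} [CommRing R] [AddCommGroup M] [Module R M] [Invertible (2 : R)]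
  (Q : QuadraticForm R M)

local notation "B" => QuadraticMap.associated (R := R) Q
local notation "ιₑ" => ExteriorAlgebra.ι R
local notation "γ" => LinearEquiv.symm (equivExterior Q)

theorem equivExterior_symm_ι (m : M) : γ (ιₑ m) = ι Q m := by
  rw [equivExterior, changeFormEquiv_symm]
  exact changeForm_ι (changeForm.neg_proof changeForm.associated_neg_proof) m

theorem equivExterior_symm_ι_mul (m : M) (x : ExteriorAlgebra R M) :
    γ (ιₑ m * x) = ι Q m * γ x - contractLeft (B m) (γ x) := by
  rw [equivExterior, changeFormEquiv_symm]
  refine (changeForm_ι_mul (changeForm.neg_proof changeForm.associated_neg_proof) _ _).trans ?_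
  simp only [map_neg, LinearMap.neg_apply, neg_neg]
  rfl

theorem equivExterior_symm_ι_mul_ι (x y : M) :
    γ (ιₑ x * ιₑ y) = ι Q x * ι Q y - algebraMap R _ (B x y) := by
  rw [equivExterior_symm_ι_mul, equivExterior_symm_ι, contractLeft_ι]

theorem contractLeft_equivExterior_symm_ι_mul_ι (d : Module.Dual R M) (x y : M) :
    contractLeft d (γ (ιₑ x * ιₑ y)) = d x • ι Q y - d y • ι Q x := by
  rw [equivExterior_symm_ι_mul_ι, map_sub, contractLeft_ι_mul, contractLeft_ι,
    contractLeft_algebraMap, sub_zero, ← Algebra.commutes, ← Algebra.smul_def]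

theorem equivExterior_symm_bivector_mul_bivector (p q r s : M) :
    γ (ιₑ p * ιₑ q * (ιₑ r * ιₑ s)) = γ (ιₑ p * ιₑ q) * γ (ιₑ r * ιₑ s)
      + algebraMap R _ (B p r * B q s - B p s * B q r)
      + γ (ExteriorAlgebra.bivectorBracket B p q r s) := by
  rw [mul_assoc, equivExterior_symm_ι_mul Q p, equivExterior_symm_ι_mul Q q]
  simp only [map_sub, map_add, map_smul, contractLeft_ι_mul, contractLeft_ι,
    contractLeft_equivExterior_symm_ι_mul_ι, ExteriorAlgebra.bivectorBracket]
  simp only [equivExterior_symm_ι_mul_ι, Algebra.algebraMap_eq_smul_one, mul_sub, sub_mul,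
    mul_smul_comm, smul_mul_assoc, one_mul, mul_one, smul_sub, mul_assoc, smul_smul]
  module

theorem equivExterior_symm_bivector_sq {ι : Type*} [Fintype ι] (v w : ι → M) :
    γ (∑ l, ιₑ (v l) * ιₑ (w l)) * γ (∑ l, ιₑ (v l) * ιₑ (w l)) =
      γ ((∑ l, ιₑ (v l) * ιₑ (w l)) * ∑ l, ιₑ (v l) * ιₑ (w l))
        - algebraMap R _ (∑ l, ∑ m,
            (B (v l) (v m) * B (w l) (w m) - B (v l) (w m) * B (w l) (v m))) := by
  have hbracket : ∑ l, ∑ m, γ (ExteriorAlgebra.bivectorBracket B (v l) (w l) (v m) (w m)) = 0 :=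
    Finset.sum_sum_eq_zero_of_antisymm (R := R) _ fun l m => by
      rw [ExteriorAlgebra.bivectorBracket_swap (QuadraticForm.associated_isSymm R Q), map_neg]
  rw [eq_sub_iff_add_eq, Finset.sum_mul_sum, map_sum, Finset.sum_mul_sum]
  simp only [map_sum, equivExterior_symm_bivector_mul_bivector, Finset.sum_add_distrib,
    hbracket, add_zero]

end CliffordAlgebra

theorem associated_negNormSqForm {V : Type*} [NormedAddCommGroup V] [InnerProductSpace ℝ V]
    (x y : V) : QuadraticMap.associated (negNormSqForm V) x y = -⟪x, y⟫ := by
  rw [negNormSqForm, map_neg, QuadraticMap.associated_left_inverse ℝ fun x y => real_inner_comm y x]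
  rfl

theorem stmt_5_general {V : Type*} [NormedAddCommGroup V] [InnerProductSpace ℝ V]
    {S : Type*} [AddCommGroup S] [Module ℝ S]
    [Module (CliffordAlgebra (negNormSqForm V)) S]
    [IsScalarTower ℝ (CliffordAlgebra (negNormSqForm V)) S]
    (c : ExteriorAlgebra ℝ V →ₗ[ℝ] CliffordAlgebra (negNormSqForm V))
    (hc : c = (CliffordAlgebra.equivExterior (negNormSqForm V)).symm.toLinearMap)
    {s : ℕ} (v w : Fin s → V) (η : ExteriorAlgebra ℝ V)
    (hη : η = ∑ l, ExteriorAlgebra.ι ℝ (v l) * ExteriorAlgebra.ι ℝ (w l))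
    (normSq : ℝ)
    (hnorm : normSq = ∑ l, ∑ m,
      (⟪v l, v m⟫ * ⟪w l, w m⟫ - ⟪v l, w m⟫ * ⟪w l, v m⟫)) :
    ∀ φ : S, c η • (c η • φ) = c (η * η) • φ - normSq • φ := by
  intro φ
  have key := CliffordAlgebra.equivExterior_symm_bivector_sq (negNormSqForm V) v w
  simp only [associated_negNormSqForm, neg_mul_neg] at key
  subst hc hη hnorm
  rw [← mul_smul, LinearEquiv.coe_toLinearMap, key, sub_smul, algebraMap_smul]

/-- for a Clifford module `S` over `Cl(V)` and a 2-form
`η = Σ_l v_l ∧ w_l ∈ Λ²V` (every 2-vector is such a sum), with `γ` the Clifford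
multiplication extended to exterior forms via the standard linear isomorphism
`Λ*V ≅ Cl(V)` (the inverse of `CliffordAlgebra.equivExterior`), one has
`γ(η)² = γ(η ∧ η) − |η|²·Id` on `S`, where
`|η|² = Σ_{l,m} (⟪v_l,v_m⟫⟪w_l,w_m⟫ − ⟪v_l,w_m⟫⟪w_l,v_m⟫)` is the squared norm of `η`
in the induced inner product on `Λ²V`. -/
theorem stmt_5 {V : Type*} [NormedAddCommGroup V] [InnerProductSpace ℝ V]
    [FiniteDimensional ℝ V]
    {S : Type*} [AddCommGroup S] [Module ℝ S]
    [Module (CliffordAlgebra (negNormSqForm V)) S]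
    [IsScalarTower ℝ (CliffordAlgebra (negNormSqForm V)) S]
    (c : ExteriorAlgebra ℝ V →ₗ[ℝ] CliffordAlgebra (negNormSqForm V))
    (hc : c = (CliffordAlgebra.equivExterior (negNormSqForm V)).symm.toLinearMap)
    {s : ℕ} (v w : Fin s → V) (η : ExteriorAlgebra ℝ V)
    (hη : η = ∑ l, ExteriorAlgebra.ι ℝ (v l) * ExteriorAlgebra.ι ℝ (w l))
    (normSq : ℝ)
    (hnorm : normSq = ∑ l, ∑ m,
      (⟪v l, v m⟫ * ⟪w l, w m⟫ - ⟪v l, w m⟫ * ⟪w l, v m⟫)) :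
    ∀ φ : S, c η • (c η • φ) = c (η * η) • φ - normSq • φ :=
  stmt_5_general c hc v w η hη normSq hnorm
end

section
/- Let R : Λ²V → Λ²V be a symmetric endomorphism satisfying the first Bianchi identity, i.e., the associated (4,0)-tensor R(x,y,z,t) = ⟨R(x∧y), t∧z⟩ satisfies R(x,y,z,t) + R(y,z,x,t) + R(z,x,y,t) = 0. If h₁,…,h_s is an orthonormal eigenbasis of R with eigenvalues κ₁,…,κ_s, then Σ_l κ_l · (h_l ∧ h_l) = 0 in Λ⁴V. -/
set_option maxHeartbeats 1000000

open scoped RealInnerProductSpace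
open ExteriorAlgebra

section AuxLemmas

variable {V : Type*} [AddCommGroup V] [Module ℝ V]

private lemma ext_swap (x y : V) : ι ℝ x * ι ℝ y = -(ι ℝ y * ι ℝ x) :=
  eq_neg_of_add_eq_zero_left (ι_add_mul_swap x y)

private lemma S12 (a b c d : V) :
    ι ℝ b * ι ℝ a * (ι ℝ c * ι ℝ d) = -(ι ℝ a * ι ℝ b * (ι ℝ c * ι ℝ d)) := by
  rw [ext_swap b a, neg_mul]

private lemma S34 (a b c d : V) :
    ι ℝ a * ι ℝ b * (ι ℝ d * ι ℝ c) = -(ι ℝ a * ι ℝ b * (ι ℝ c * ι ℝ d)) := by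
  rw [ext_swap d c, mul_neg]

private lemma S23 (a b c d : V) :
    ι ℝ a * ι ℝ c * (ι ℝ b * ι ℝ d) = -(ι ℝ a * ι ℝ b * (ι ℝ c * ι ℝ d)) := by
  simp only [← mul_assoc]
  rw [mul_assoc (ι ℝ a) (ι ℝ c) (ι ℝ b), ext_swap c b, mul_neg, ← mul_assoc, neg_mul]

private lemma N1 (a b c d : V) :
    ι ℝ c * ι ℝ d * (ι ℝ a * ι ℝ b) = ι ℝ a * ι ℝ b * (ι ℝ c * ι ℝ d) := by
  rw [S23 c a d b, S12 a c d b, S34 a c b d, S23 a b c d, neg_neg, neg_neg]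

private lemma N2 (a b c d : V) :
    ι ℝ a * ι ℝ d * (ι ℝ b * ι ℝ c) = ι ℝ a * ι ℝ b * (ι ℝ c * ι ℝ d) := by
  rw [S23 a b d c, S34 a b c d, neg_neg]

private lemma N3 (a b c d : V) :
    ι ℝ b * ι ℝ d * (ι ℝ c * ι ℝ a) = ι ℝ a * ι ℝ b * (ι ℝ c * ι ℝ d) := by
  rw [S34 b d a c, S23 b a d c, S12 a b d c, S34 a b c d, neg_neg, neg_neg]

/-- The summand `G(R(x∧y), z∧w) • (z∧w)·(x∧y)`. -/
private def Dq (G : ExteriorAlgebra ℝ V →ₗ[ℝ] ExteriorAlgebra ℝ V →ₗ[ℝ] ℝ)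
    (R : ExteriorAlgebra ℝ V →ₗ[ℝ] ExteriorAlgebra ℝ V) (x y z w : V) :
    ExteriorAlgebra ℝ V :=
  G (R (ι ℝ x * ι ℝ y)) (ι ℝ z * ι ℝ w) • (ι ℝ z * ι ℝ w * (ι ℝ x * ι ℝ y))

variable (G : ExteriorAlgebra ℝ V →ₗ[ℝ] ExteriorAlgebra ℝ V →ₗ[ℝ] ℝ)
    (R : ExteriorAlgebra ℝ V →ₗ[ℝ] ExteriorAlgebra ℝ V)

private lemma Dq_diag12 (x z w : V) : Dq G R x x z w = 0 := by
  simp [Dq, ι_sq_zero]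

private lemma Dq_diag34 (x y z : V) : Dq G R x y z z = 0 := by
  simp [Dq, ι_sq_zero]

private lemma Dq_swap12 (x y z w : V) : Dq G R y x z w = Dq G R x y z w := by
  unfold Dq
  rw [ext_swap y x]
  simp [mul_neg, neg_smul, smul_neg]

private lemma Dq_swap34 (x y z w : V) : Dq G R x y w z = Dq G R x y z w := by
  unfold Dq
  rw [ext_swap w z]
  simp [neg_mul, neg_smul, smul_neg]

private lemma Dq_cyc
    (hBianchi : ∀ x y z t : V,
      G (R (ι ℝ x * ι ℝ y)) (ι ℝ t * ι ℝ z) +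
        G (R (ι ℝ y * ι ℝ z)) (ι ℝ t * ι ℝ x) +
        G (R (ι ℝ z * ι ℝ x)) (ι ℝ t * ι ℝ y) = 0)
    (x y z t : V) :
    Dq G R x y z t + Dq G R y z x t + Dq G R z x y t = 0 := by
  unfold Dq
  rw [N1 x y z t, N2 x y z t, N3 x y z t, ← add_smul, ← add_smul]
  have hb := hBianchi x y z t
  have e1 : G (R (ι ℝ x * ι ℝ y)) (ι ℝ z * ι ℝ t)
      = -G (R (ι ℝ x * ι ℝ y)) (ι ℝ t * ι ℝ z) := by rw [ext_swap z t, map_neg]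
  have e2 : G (R (ι ℝ y * ι ℝ z)) (ι ℝ x * ι ℝ t)
      = -G (R (ι ℝ y * ι ℝ z)) (ι ℝ t * ι ℝ x) := by rw [ext_swap x t, map_neg]
  have e3 : G (R (ι ℝ z * ι ℝ x)) (ι ℝ y * ι ℝ t)
      = -G (R (ι ℝ z * ι ℝ x)) (ι ℝ t * ι ℝ y) := by rw [ext_swap y t, map_neg]
  rw [e1, e2, e3, show
    -G (R (ι ℝ x * ι ℝ y)) (ι ℝ t * ι ℝ z) + -G (R (ι ℝ y * ι ℝ z)) (ι ℝ t * ι ℝ x)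
      + -G (R (ι ℝ z * ι ℝ x)) (ι ℝ t * ι ℝ y) = 0 by linarith, zero_smul]

/-- The family `e_i ∧ e_j`, `i < j`. -/
private def pairFam {n : ℕ} (e : Fin n → V)
    (p : {p : Fin n × Fin n // p.1 < p.2}) : ExteriorAlgebra ℝ V :=
  ι ℝ (e p.1.1) * ι ℝ (e p.1.2)

end AuxLemmas

private lemma half_sum {M : Type*} [AddCommGroup M] [Module ℝ M] {n : ℕ}
    (f : Fin n → Fin n → M) (hsymm : ∀ i j, f j i = f i j) (hdiag : ∀ i, f i i = 0) :
    ∑ i, ∑ j, f i j = (2:ℝ) • ∑ p : {p : Fin n × Fin n // p.1 < p.2}, f p.1.1 p.1.2 := by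
  classical
  have hsub : ∑ p : {p : Fin n × Fin n // p.1 < p.2}, f p.1.1 p.1.2
      = ∑ p ∈ Finset.univ.filter (fun p : Fin n × Fin n => p.1 < p.2), f p.1 p.2 :=
    (Finset.sum_subtype _ (by simp) (fun p : Fin n × Fin n => f p.1 p.2)).symm
  have h1 : ∑ i, ∑ j, f i j = ∑ p : Fin n × Fin n, f p.1 p.2 :=
    (Fintype.sum_prod_type (fun p : Fin n × Fin n => f p.1 p.2)).symm
  rw [h1, hsub,
    ← Finset.sum_filter_add_sum_filter_not Finset.univ (fun p : Fin n × Fin n => p.1 < p.2)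
      (fun p => f p.1 p.2)]
  have h2 : ∑ p ∈ Finset.univ.filter (fun p : Fin n × Fin n => ¬ p.1 < p.2), f p.1 p.2
      = ∑ p ∈ Finset.univ.filter (fun p : Fin n × Fin n => p.1 < p.2), f p.1 p.2 := by
    rw [← Finset.sum_filter_add_sum_filter_not
      (Finset.univ.filter (fun p : Fin n × Fin n => ¬ p.1 < p.2))
      (fun p : Fin n × Fin n => p.2 < p.1) (fun p => f p.1 p.2)]
    have hd : ∑ p ∈ (Finset.univ.filter (fun p : Fin n × Fin n => ¬ p.1 < p.2)).filter
        (fun p : Fin n × Fin n => ¬ p.2 < p.1), f p.1 p.2 = 0 := by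
      refine Finset.sum_eq_zero fun p hp => ?_
      simp only [Finset.mem_filter] at hp
      have heq : p.1 = p.2 := le_antisymm (not_lt.mp hp.2) (not_lt.mp hp.1.2)
      rw [heq]; exact hdiag p.2
    rw [hd, add_zero]
    refine Finset.sum_bij' (fun p _ => Prod.swap p) (fun p _ => Prod.swap p)
      ?_ ?_ ?_ ?_ ?_
    · intro p hp
      simp only [Finset.mem_filter, Finset.mem_univ, true_and] at hp ⊢
      exact hp.2
    · intro p hp
      simp only [Finset.mem_filter, Finset.mem_univ, true_and] at hp ⊢
      exact ⟨not_lt.mpr hp.le, hp⟩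
    · intro p _; exact Prod.swap_swap p
    · intro p _; exact Prod.swap_swap p
    · intro p _; exact (hsymm p.1 p.2).symm
  rw [h2, two_smul]

private lemma aux_expand {E : Type*} [AddCommGroup E] [Module ℝ E]
    (G : E →ₗ[ℝ] E →ₗ[ℝ] ℝ) {κ : Type*} [Fintype κ] [DecidableEq κ] (w : κ → E)
    (horth : ∀ i j, G (w i) (w j) = if i = j then 1 else 0) {a : E}
    (ha : a ∈ Submodule.span ℝ (Set.range w)) :
    a = ∑ i, G a (w i) • w i := by
  obtain ⟨c, rfl⟩ := (Submodule.mem_span_range_iff_exists_fun ℝ).mp ha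
  refine Finset.sum_congr rfl fun i _ => ?_
  have : G (∑ l, c l • w l) (w i) = c i := by
    rw [map_sum, LinearMap.sum_apply]
    simp [horth, Finset.sum_ite_eq', mul_ite]
  rw [this]

private lemma aux_change {E F : Type*} [AddCommGroup E] [Module ℝ E] [AddCommGroup F]
    [Module ℝ F]
    (G : E →ₗ[ℝ] E →ₗ[ℝ] ℝ) {κ₁ κ₂ : Type*} [Fintype κ₁] [Fintype κ₂] [DecidableEq κ₂]
    (u : κ₁ → E) (w : κ₂ → E)
    (hu : ∀ l, u l = ∑ p, G (u l) (w p) • w p)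
    (hw : ∀ p, w p = ∑ l, G (w p) (u l) • u l)
    (hsymuw : ∀ l p, G (w p) (u l) = G (u l) (w p))
    (worth : ∀ p q, G (w p) (w q) = if p = q then 1 else 0)
    (B : E →ₗ[ℝ] E →ₗ[ℝ] F) :
    ∑ l, B (u l) (u l) = ∑ p, B (w p) (w p) := by
  have key : ∀ p q, (∑ l, G (u l) (w p) * G (u l) (w q)) = if p = q then 1 else 0 := by
    intro p q
    rw [← worth p q]
    conv_rhs => rw [hw p]
    rw [map_sum, LinearMap.sum_apply]
    refine (Finset.sum_congr rfl fun l _ => ?_).symm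
    rw [map_smul, LinearMap.smul_apply, hsymuw, smul_eq_mul]
  calc ∑ l, B (u l) (u l)
      = ∑ l, ∑ p, ∑ q, (G (u l) (w p) * G (u l) (w q)) • B (w p) (w q) := by
        refine Finset.sum_congr rfl fun l _ => ?_
        conv_lhs => rw [hu l]
        simp only [map_sum, map_smul, LinearMap.sum_apply, LinearMap.smul_apply,
          Finset.smul_sum, smul_smul, smul_eq_mul]
        rw [Finset.sum_comm]
        exact Finset.sum_congr rfl fun p _ => Finset.sum_congr rfl fun q _ => by
          rw [mul_comm]
    _ = ∑ p, ∑ q, (∑ l, G (u l) (w p) * G (u l) (w q)) • B (w p) (w q) := by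
        rw [Finset.sum_comm]
        refine Finset.sum_congr rfl fun p _ => ?_
        rw [Finset.sum_comm]
        refine Finset.sum_congr rfl fun q _ => ?_
        rw [Finset.sum_smul]
    _ = ∑ p, B (w p) (w p) := by
        simp [key, ite_smul, Finset.sum_ite_eq']

/-- let `R` be a symmetric endomorphism of `Λ²V` (symmetry w.r.t. the induced
inner product `G` on `Λ²V`, characterized on decomposables by the Gram-determinant formula)
satisfying the first Bianchi identity for the associated `(4,0)`-tensor
`R(x,y,z,t) = ⟨R(x∧y), t∧z⟩`.  If `h₁,…,h_s` is an orthonormal eigenbasis of `R` with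
eigenvalues `κ₁,…,κ_s`, then `Σ_l κ_l · (h_l ∧ h_l) = 0` in `Λ⁴V`.  We work inside the full
exterior algebra: `x ∧ y = ι x * ι y`, and `⋀[ℝ]^2 V` is the second exterior power. -/
theorem stmt_6 {V : Type*} [NormedAddCommGroup V] [InnerProductSpace ℝ V]
    [FiniteDimensional ℝ V]
    (G : ExteriorAlgebra ℝ V →ₗ[ℝ] ExteriorAlgebra ℝ V →ₗ[ℝ] ℝ)
    (hG : ∀ v₁ v₂ w₁ w₂ : V,
      G (ι ℝ v₁ * ι ℝ v₂) (ι ℝ w₁ * ι ℝ w₂) =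
        ⟪v₁, w₁⟫ * ⟪v₂, w₂⟫ - ⟪v₁, w₂⟫ * ⟪v₂, w₁⟫)
    (R : ExteriorAlgebra ℝ V →ₗ[ℝ] ExteriorAlgebra ℝ V)
    (hR2 : ∀ a ∈ ⋀[ℝ]^2 V, R a ∈ ⋀[ℝ]^2 V)
    (hsym : ∀ a b : ExteriorAlgebra ℝ V, a ∈ ⋀[ℝ]^2 V → b ∈ ⋀[ℝ]^2 V →
      G (R a) b = G a (R b))
    (hBianchi : ∀ x y z t : V,
      G (R (ι ℝ x * ι ℝ y)) (ι ℝ t * ι ℝ z) +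
        G (R (ι ℝ y * ι ℝ z)) (ι ℝ t * ι ℝ x) +
        G (R (ι ℝ z * ι ℝ x)) (ι ℝ t * ι ℝ y) = 0)
    {s : ℕ} (h : Fin s → ExteriorAlgebra ℝ V) (κ : Fin s → ℝ)
    (hmem : ∀ l, h l ∈ ⋀[ℝ]^2 V)
    (hspan : ∀ a ∈ ⋀[ℝ]^2 V, a ∈ Submodule.span ℝ (Set.range h))
    (horth : ∀ i j, G (h i) (h j) = if i = j then 1 else 0)
    (heig : ∀ l, R (h l) = κ l • h l) :
    ∑ l, κ l • (h l * h l) = 0 := by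
  classical
  let e := stdOrthonormalBasis ℝ V
  have eorth : ∀ i j, ⟪e i, e j⟫ = if i = j then (1:ℝ) else 0 :=
    orthonormal_iff_ite.mp e.orthonormal
  have hpow : (⋀[ℝ]^2 V) = LinearMap.range (ι ℝ : V →ₗ[ℝ] ExteriorAlgebra ℝ V)
      * LinearMap.range (ι ℝ : V →ₗ[ℝ] ExteriorAlgebra ℝ V) := pow_two _
  have hmul2 : ∀ x y : V, ι ℝ x * ι ℝ y ∈ ⋀[ℝ]^2 V := by
    intro x y
    rw [hpow]
    exact Submodule.mul_mem_mul (LinearMap.mem_range_self _ x) (LinearMap.mem_range_self _ y)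
  have wmem : ∀ p, pairFam (⇑e) p ∈ ⋀[ℝ]^2 V := fun p => hmul2 _ _
  have worth : ∀ p q, G (pairFam (⇑e) p) (pairFam (⇑e) q) = if p = q then 1 else 0 := by
    rintro ⟨⟨i, j⟩, hij⟩ ⟨⟨k, t⟩, hkt⟩
    simp only [pairFam, hG, eorth]
    have h2 : (if i = t then (1:ℝ) else 0) * (if j = k then (1:ℝ) else 0) = 0 := by
      rcases eq_or_ne i t with rfl | hne
      · rcases eq_or_ne j k with rfl | hne'
        · exact absurd (hij.trans hkt) (lt_irrefl i)
        · simp [hne']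
      · simp [hne]
    rw [h2, sub_zero]
    by_cases h1 : i = k <;> by_cases h3 : j = t <;>
      simp [h1, h3, Subtype.ext_iff, Prod.ext_iff]
  have hstep : ∀ i j, ι ℝ (e i) * ι ℝ (e j) ∈ Submodule.span ℝ (Set.range (pairFam (⇑e))) := by
    intro i j
    rcases lt_trichotomy i j with hij | rfl | hij
    · exact Submodule.subset_span ⟨⟨(i, j), hij⟩, rfl⟩
    · rw [ι_sq_zero]; exact zero_mem _
    · rw [ext_swap]
      exact neg_mem (Submodule.subset_span ⟨⟨(j, i), hij⟩, rfl⟩)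
  have hspanw : ∀ a ∈ ⋀[ℝ]^2 V, a ∈ Submodule.span ℝ (Set.range (pairFam (⇑e))) := by
    intro a ha
    rw [hpow] at ha
    refine Submodule.mul_induction_on ha ?_ (fun x y hx hy => add_mem hx hy)
    rintro _ ⟨x, rfl⟩ _ ⟨y, rfl⟩
    have hxy : ι ℝ x * ι ℝ y
        = ∑ i, ∑ j, (e.repr x i * e.repr y j) • (ι ℝ (e i) * ι ℝ (e j)) := by
      conv_lhs => rw [← e.sum_repr x, ← e.sum_repr y]
      rw [map_sum, map_sum, Finset.sum_mul_sum]
      simp only [map_smul, smul_mul_smul_comm]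
    rw [hxy]
    exact Submodule.sum_mem _ fun i _ => Submodule.sum_mem _ fun j _ =>
      Submodule.smul_mem _ _ (hstep i j)
  have Gsym : ∀ a b, a ∈ ⋀[ℝ]^2 V → b ∈ ⋀[ℝ]^2 V → G a b = G b a := by
    intro a b ha hb
    obtain ⟨c, rfl⟩ := (Submodule.mem_span_range_iff_exists_fun ℝ).mp (hspan a ha)
    obtain ⟨d, rfl⟩ := (Submodule.mem_span_range_iff_exists_fun ℝ).mp (hspan b hb)
    simp only [map_sum, map_smul, LinearMap.sum_apply, LinearMap.smul_apply, smul_eq_mul,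
      horth, mul_ite, mul_one, mul_zero, Finset.sum_ite_eq', Finset.sum_ite_eq,
      Finset.mem_univ, if_true]
    exact Finset.sum_congr rfl fun l _ => mul_comm _ _
  have hexph : ∀ a, a ∈ ⋀[ℝ]^2 V → a = ∑ l, G a (h l) • h l := fun a ha =>
    aux_expand G h horth (hspan a ha)
  have hexpw : ∀ a, a ∈ ⋀[ℝ]^2 V → a = ∑ p, G a (pairFam (⇑e) p) • pairFam (⇑e) p :=
    fun a ha => aux_expand G (pairFam (⇑e)) worth (hspanw a ha)
  have step2 := aux_change G h (pairFam (⇑e))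
      (fun l => hexpw _ (hmem l)) (fun p => hexph _ (wmem p))
      (fun l p => Gsym _ _ (wmem p) (hmem l)) worth
      ((LinearMap.mul ℝ (ExteriorAlgebra ℝ V)).comp R)
  simp only [LinearMap.coe_comp, Function.comp_apply, LinearMap.mul_apply'] at step2
  have step1 : ∑ l, κ l • (h l * h l) = ∑ l, R (h l) * h l :=
    Finset.sum_congr rfl fun l _ => by rw [heig, smul_mul_assoc]
  have expand : ∀ p, R (pairFam (⇑e) p) * pairFam (⇑e) p
      = ∑ q : {p : Fin (Module.finrank ℝ V) × Fin (Module.finrank ℝ V) // p.1 < p.2},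
        Dq G R (e p.1.1) (e p.1.2) (e q.1.1) (e q.1.2) := by
    intro p
    conv_lhs => rw [hexpw (R (pairFam (⇑e) p)) (hR2 _ (wmem p))]
    rw [Finset.sum_mul]
    refine Finset.sum_congr rfl fun q _ => ?_
    rw [smul_mul_assoc]
    simp only [Dq, pairFam]
  -- the quadruple sum vanishes by the Bianchi identity
  have hcyc3 : ∑ i, ∑ j, ∑ k, ∑ t, (Dq G R (e i) (e j) (e k) (e t)
      + Dq G R (e j) (e k) (e i) (e t) + Dq G R (e k) (e i) (e j) (e t)) = 0 :=
    Finset.sum_eq_zero fun i _ => Finset.sum_eq_zero fun j _ =>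
      Finset.sum_eq_zero fun k _ => Finset.sum_eq_zero fun t _ =>
        Dq_cyc G R hBianchi _ _ _ _
  have hre1 : ∑ i, ∑ j, ∑ k, ∑ t, Dq G R (e j) (e k) (e i) (e t)
      = ∑ i, ∑ j, ∑ k, ∑ t, Dq G R (e i) (e j) (e k) (e t) := by
    rw [Finset.sum_comm]
    exact Finset.sum_congr rfl fun j _ => Finset.sum_comm
  have hre2 : ∑ i, ∑ j, ∑ k, ∑ t, Dq G R (e k) (e i) (e j) (e t)
      = ∑ i, ∑ j, ∑ k, ∑ t, Dq G R (e i) (e j) (e k) (e t) := by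
    calc ∑ i, ∑ j, ∑ k, ∑ t, Dq G R (e k) (e i) (e j) (e t)
        = ∑ i, ∑ k, ∑ j, ∑ t, Dq G R (e k) (e i) (e j) (e t) :=
          Finset.sum_congr rfl fun i _ => Finset.sum_comm
      _ = ∑ k, ∑ i, ∑ j, ∑ t, Dq G R (e k) (e i) (e j) (e t) := Finset.sum_comm
  have hQ : ∑ i, ∑ j, ∑ k, ∑ t, Dq G R (e i) (e j) (e k) (e t) = 0 := by
    have hsplit : ∑ i, ∑ j, ∑ k, ∑ t, (Dq G R (e i) (e j) (e k) (e t)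
        + Dq G R (e j) (e k) (e i) (e t) + Dq G R (e k) (e i) (e j) (e t))
        = (∑ i, ∑ j, ∑ k, ∑ t, Dq G R (e i) (e j) (e k) (e t))
          + (∑ i, ∑ j, ∑ k, ∑ t, Dq G R (e j) (e k) (e i) (e t))
          + (∑ i, ∑ j, ∑ k, ∑ t, Dq G R (e k) (e i) (e j) (e t)) := by
      simp only [Finset.sum_add_distrib]
    rw [hsplit, hre1, hre2] at hcyc3
    have h3 : (3:ℝ) • (∑ i, ∑ j, ∑ k, ∑ t, Dq G R (e i) (e j) (e k) (e t)) = 0 := by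
      rw [show (3:ℝ) = 1 + 1 + 1 by norm_num, add_smul, add_smul, one_smul]
      exact hcyc3
    exact (smul_eq_zero.mp h3).resolve_left (by norm_num)
  -- halving in each pair of indices
  have hhalf2 : ∀ i j, ∑ k, ∑ t, Dq G R (e i) (e j) (e k) (e t)
      = (2:ℝ) • ∑ q : {p : Fin (Module.finrank ℝ V) × Fin (Module.finrank ℝ V) // p.1 < p.2},
          Dq G R (e i) (e j) (e q.1.1) (e q.1.2) :=
    fun i j => half_sum _ (fun k t => Dq_swap34 G R _ _ _ _) (fun k => Dq_diag34 G R _ _ _)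
  have hhalf1 : ∑ i, ∑ j,
        (∑ q : {p : Fin (Module.finrank ℝ V) × Fin (Module.finrank ℝ V) // p.1 < p.2},
          Dq G R (e i) (e j) (e q.1.1) (e q.1.2))
      = (2:ℝ) • ∑ p : {p : Fin (Module.finrank ℝ V) × Fin (Module.finrank ℝ V) // p.1 < p.2},
          ∑ q : {p : Fin (Module.finrank ℝ V) × Fin (Module.finrank ℝ V) // p.1 < p.2},
          Dq G R (e p.1.1) (e p.1.2) (e q.1.1) (e q.1.2) :=
    half_sum _ (fun i j => Finset.sum_congr rfl fun q _ => Dq_swap12 G R _ _ _ _)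
      (fun i => Finset.sum_eq_zero fun q _ => Dq_diag12 G R _ _ _)
  have e1 : ∑ i, ∑ j, ∑ k, ∑ t, Dq G R (e i) (e j) (e k) (e t)
      = (2:ℝ) • ∑ i, ∑ j,
        (∑ q : {p : Fin (Module.finrank ℝ V) × Fin (Module.finrank ℝ V) // p.1 < p.2},
          Dq G R (e i) (e j) (e q.1.1) (e q.1.2)) := by
    simp only [hhalf2]
    simp only [← Finset.smul_sum]
  have h4 : (2:ℝ) • ((2:ℝ) •
      ∑ p : {p : Fin (Module.finrank ℝ V) × Fin (Module.finrank ℝ V) // p.1 < p.2},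
        ∑ q : {p : Fin (Module.finrank ℝ V) × Fin (Module.finrank ℝ V) // p.1 < p.2},
        Dq G R (e p.1.1) (e p.1.2) (e q.1.1) (e q.1.2)) = 0 := by
    rw [← hhalf1, ← e1]
    exact hQ
  have hS : ∑ p : {p : Fin (Module.finrank ℝ V) × Fin (Module.finrank ℝ V) // p.1 < p.2},
      ∑ q : {p : Fin (Module.finrank ℝ V) × Fin (Module.finrank ℝ V) // p.1 < p.2},
      Dq G R (e p.1.1) (e p.1.2) (e q.1.1) (e q.1.2) = 0 := by
    have h5 := (smul_eq_zero.mp h4).resolve_left (by norm_num)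
    exact (smul_eq_zero.mp h5).resolve_left (by norm_num)
  rw [step1, step2]
  calc ∑ p, R (pairFam (⇑e) p) * pairFam (⇑e) p
      = ∑ p : {p : Fin (Module.finrank ℝ V) × Fin (Module.finrank ℝ V) // p.1 < p.2},
        ∑ q : {p : Fin (Module.finrank ℝ V) × Fin (Module.finrank ℝ V) // p.1 < p.2},
        Dq G R (e p.1.1) (e p.1.2) (e q.1.1) (e q.1.2) :=
      Finset.sum_congr rfl fun p _ => expand p
    _ = 0 := hS
end
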